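/- Let α be strictly increasing with α_n > 1 and α_n → ∞. The following assertions are equivalent: (a) lim_{n→∞} (log n)/α_n = 0; (b) σ(C; Λ₀(α)) = σ_pt(C; Λ₀(α)); (c) σ(C; Λ₀(α)) = Σ = {1/m : m ≥ 1}. -/

import Mathlib

open Filter Finset Topology

noncomputable section

/-- The weight `w_k(n) = e^{-alpha_n / k}`.  Indices are shifted by one: the natural
numbers `k n : Nat` represent the indices `k+1` and `n+1` (both running from `1`). -/
def wt (a : ℕ → ℝ) (k n : ℕ) : ℝ := Real.exp (-(a n) / ((k : ℝ) + 1))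

/-- Membership in the power series space of finite type `Λ₀(α)`:
`x ∈ Λ₀(α)` iff `w_k(n)|x_n| → 0` for every `k ≥ 1`. -/
def memLambda (a : ℕ → ℝ) (x : ℕ → ℂ) : Prop :=
  ∀ k : ℕ, Tendsto (fun n => wt a k n * ‖x n‖) atTop (𝓝 0)

/-- The norm `p_k(x) = sup_n w_k(n)|x_n|` generating the Fréchet topology of `Λ₀(α)`. -/
def pk (a : ℕ → ℝ) (k : ℕ) (x : ℕ → ℂ) : ℝ := ⨆ n : ℕ, wt a k n * ‖x n‖

/-- The discrete Cesàro operator `(C x)_n = (x_1 + ⋯ + x_n)/n` (0-indexed). -/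
def cesaro (x : ℕ → ℂ) : ℕ → ℂ := fun n => (∑ i ∈ Finset.range (n + 1), x i) / ((n : ℂ) + 1)

/-- `lam` is an eigenvalue of the Cesàro operator on `Λ₀(α)`. -/
def IsEigen (a : ℕ → ℝ) (lam : ℂ) : Prop :=
  ∃ x : ℕ → ℂ, memLambda a x ∧ x ≠ 0 ∧ cesaro x = lam • x

/-- `lam` belongs to the resolvent set of the Cesàro operator on `Λ₀(α)`:
`lam • I - C` has a linear inverse `T` on `Λ₀(α)` which is continuous for the
Fréchet topology generated by the norms `p_k`. -/
def InResolvent (a : ℕ → ℝ) (lam : ℂ) : Prop :=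
  ∃ T : (ℕ → ℂ) → (ℕ → ℂ),
    (∀ x, memLambda a x → memLambda a (T x)) ∧
    (∀ x y, memLambda a x → memLambda a y → T (x + y) = T x + T y) ∧
    (∀ (c : ℂ) (x), memLambda a x → T (c • x) = c • T x) ∧
    (∀ k : ℕ, ∃ l : ℕ, ∃ M : ℝ, 0 < M ∧ ∀ x, memLambda a x → pk a k (T x) ≤ M * pk a l x) ∧
    (∀ x, memLambda a x → T (lam • x - cesaro x) = x) ∧
    (∀ x, memLambda a x → lam • T x - cesaro (T x) = x)


lemma wt_pos (a : ℕ → ℝ) (k n : ℕ) : 0 < wt a k n := Real.exp_pos _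

lemma memLambda_zero (a : ℕ → ℝ) : memLambda a 0 := by
  intro k
  simpa using (tendsto_const_nhds : Tendsto (fun _ : ℕ => (0:ℝ)) atTop (𝓝 0))

lemma mem_bdd {a : ℕ → ℝ} {x : ℕ → ℂ} (h : memLambda a x) (k : ℕ) :
    BddAbove (Set.range fun n => wt a k n * ‖x n‖) := (h k).bddAbove_range

lemma le_pk {a : ℕ → ℝ} {x : ℕ → ℂ} (h : memLambda a x) (k n : ℕ) :
    wt a k n * ‖x n‖ ≤ pk a k x := le_ciSup (mem_bdd h k) n

lemma pk_nonneg {a : ℕ → ℝ} {x : ℕ → ℂ} (h : memLambda a x) (k : ℕ) : 0 ≤ pk a k x :=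
  le_trans (mul_nonneg (wt_pos a k 0).le (norm_nonneg _)) (le_pk h k 0)

/-- an eigenvalue is in the spectrum -/
lemma eigen_not_res {a : ℕ → ℝ} {lam : ℂ} (h : IsEigen a lam) : ¬ InResolvent a lam := by
  obtain ⟨x, hx, hx0, hc⟩ := h
  rintro ⟨T, -, hadd, -, -, hleft, -⟩
  have hT0 : T 0 = 0 := by
    have := hadd 0 0 (memLambda_zero a) (memLambda_zero a)
    simpa using this
  have : T (lam • x - cesaro x) = x := hleft x hx
  rw [hc, sub_self] at this
  exact hx0 (by rw [← this, hT0])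

/-- 0 is not an eigenvalue -/
lemma not_eigen_zero (a : ℕ → ℝ) : ¬ IsEigen a 0 := by
  rintro ⟨x, -, hx0, hc⟩
  apply hx0
  have hsum : ∀ n, ∑ i ∈ Finset.range (n+1), x i = 0 := by
    intro n
    have := congrFun hc n
    simp only [cesaro, Pi.smul_apply, zero_smul, smul_eq_mul, zero_mul] at this
    rcases div_eq_zero_iff.1 this with h | h
    · exact h
    · exact absurd h (Nat.cast_add_one_ne_zero n)
  funext n
  induction n with
  | zero => have := hsum 0; simpa using this
  | succ n ih =>
      have h1 := hsum (n+1)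
      rw [Finset.sum_range_succ, hsum n] at h1
      simpa using h1

def ev (j : ℕ) : ℕ → ℂ := fun n => if n = j then 1 else 0

lemma memLambda_ev (a : ℕ → ℝ) (j : ℕ) : memLambda a (ev j) := by
  intro k
  apply tendsto_atTop_of_eventually_const (i₀ := j + 1)
  intro n hn
  have : n ≠ j := by omega
  simp [ev, this]

lemma pk_ev_le (a : ℕ → ℝ) (l j : ℕ) : pk a l (ev j) ≤ wt a l j := by
  apply ciSup_le
  intro n
  by_cases h : n = j
  · subst h; simp [ev]
  · simp only [ev, if_neg h, norm_zero, mul_zero]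
    exact (wt_pos a l j).le

lemma res0_tendsto {a : ℕ → ℝ} (h1 : ∀ n, 1 < a n) (htop : Tendsto a atTop atTop)
    (hres : InResolvent a 0) :
    Tendsto (fun n : ℕ => Real.log ((n : ℝ) + 1) / a n) atTop (𝓝 0) := by
  obtain ⟨T, hmaps, -, -, hcont, -, hright⟩ := hres
  have hpos : ∀ n, (0:ℝ) < a n := fun n => lt_trans one_pos (h1 n)
  have key : ∀ k : ℕ, ∃ M : ℝ, 0 < M ∧ ∀ j : ℕ,
      Real.log ((j:ℝ)+1) ≤ Real.log M + a j / ((k:ℝ)+1) := by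
    intro k
    obtain ⟨l, M, hM, hest⟩ := hcont k
    refine ⟨M, hM, fun j => ?_⟩
    set u := T (ev j) with hu
    have memu : memLambda a u := hmaps _ (memLambda_ev a j)
    have hces : cesaro u = -(ev j) := by
      have := hright (ev j) (memLambda_ev a j)
      funext n
      have h2 := congrFun this n
      simp only [Pi.sub_apply, Pi.smul_apply, zero_smul, zero_sub, Pi.zero_apply,
        Pi.neg_apply] at h2 ⊢
      rw [hu, ← h2, neg_neg]
    have hc : ∀ n, ∑ i ∈ Finset.range (n+1), u i = -(ev j n) * ((n:ℂ)+1) := by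
      intro n
      have h2 := congrFun hces n
      simp only [cesaro, Pi.neg_apply] at h2
      have hne : ((n:ℂ)+1) ≠ 0 := Nat.cast_add_one_ne_zero n
      field_simp at h2
      rw [h2]; ring
    have hsj : ∑ i ∈ Finset.range j, u i = 0 := by
      cases j with
      | zero => simp
      | succ jj =>
          have := hc jj
          have hne : jj ≠ jj + 1 := by omega
          simpa [ev, hne] using this
    have huj : u j = -((j:ℂ)+1) := by
      have h2 := hc j
      rw [Finset.sum_range_succ, hsj, zero_add] at h2
      simpa [ev] using h2
    have habs : ‖u j‖ = (j:ℝ)+1 := by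
      rw [huj, norm_neg]
      have : ((j:ℂ)+1) = ((j+1:ℕ):ℂ) := by push_cast; ring
      rw [this, Complex.norm_natCast]
      push_cast; ring
    have hineq : ((j:ℝ)+1) * wt a k j ≤ M * wt a l j := by
      calc ((j:ℝ)+1) * wt a k j = wt a k j * ‖u j‖ := by rw [habs]; ring
        _ ≤ pk a k u := le_pk memu k j
        _ ≤ M * pk a l (ev j) := hest _ (memLambda_ev a j)
        _ ≤ M * wt a l j := mul_le_mul_of_nonneg_left (pk_ev_le a l j) hM.le
    have hlpos : (0:ℝ) < ((j:ℝ)+1) * wt a k j :=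
      mul_pos (by positivity) (wt_pos a k j)
    have hlog := Real.log_le_log hlpos hineq
    rw [Real.log_mul (by positivity) (wt_pos a k j).ne',
        Real.log_mul hM.ne' (wt_pos a l j).ne'] at hlog
    unfold wt at hlog
    rw [Real.log_exp, Real.log_exp] at hlog
    have h3 : -(a j) / ((l:ℝ)+1) ≤ 0 := by
      apply div_nonpos_of_nonpos_of_nonneg
      · linarith [hpos j]
      · positivity
    have h4 : Real.log ((j:ℝ)+1) + (-(a j) / ((k:ℝ)+1)) ≤ Real.log M := by
      linarith
    have : -(a j) / ((k:ℝ)+1) = -(a j / ((k:ℝ)+1)) := by ring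
    linarith [h4, this ▸ h4]
  rw [NormedAddCommGroup.tendsto_nhds_zero]
  intro ε hε
  obtain ⟨k, hk⟩ := exists_nat_one_div_lt (half_pos hε)
  obtain ⟨M, hM, hkey⟩ := key k
  have h2 : Tendsto (fun j : ℕ => Real.log M / a j) atTop (𝓝 0) :=
    Tendsto.div_atTop tendsto_const_nhds htop
  have h3 := (NormedAddCommGroup.tendsto_nhds_zero.1 h2) (ε/2) (half_pos hε)
  filter_upwards [h3] with j hj
  have hlogj : (0:ℝ) ≤ Real.log ((j:ℝ)+1) := Real.log_nonneg (by push_cast; linarith)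
  have haj := (hpos j).ne'
  rw [Real.norm_eq_abs, abs_of_nonneg (div_nonneg hlogj (hpos j).le)]
  have hstep : Real.log ((j:ℝ)+1) / a j ≤ Real.log M / a j + 1/((k:ℝ)+1) := by
    have h5 : (Real.log M + a j / ((k:ℝ)+1)) / a j = Real.log M / a j + 1/((k:ℝ)+1) := by
      field_simp
    rw [← h5]
    exact div_le_div_of_nonneg_right (hkey j) (hpos j).le
  have h6 : Real.log M / a j ≤ |Real.log M / a j| := le_abs_self _
  rw [Real.norm_eq_abs] at hj
  calc Real.log ((j:ℝ)+1) / a j ≤ Real.log M / a j + 1/((k:ℝ)+1) := hstep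
    _ < ε/2 + ε/2 := by linarith
    _ = ε := by ring

lemma tendsto_aux {a : ℕ → ℝ} (h1 : ∀ n, 1 < a n) (htop : Tendsto a atTop atTop)
    (hlog : Tendsto (fun n : ℕ => Real.log ((n : ℝ) + 1) / a n) atTop (𝓝 0))
    (p : ℕ) (q : ℝ) (hq : 0 < q) :
    Tendsto (fun n : ℕ => ((n:ℝ)+3)^p * Real.exp (-(a n)/q)) atTop (𝓝 0) := by
  have hpos : ∀ n, (0:ℝ) < a n := fun n => lt_trans one_pos (h1 n)
  have hlog3 : Tendsto (fun n : ℕ => Real.log ((n:ℝ)+3) / a n) atTop (𝓝 0) := by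
    apply squeeze_zero (fun n => div_nonneg (Real.log_nonneg (by push_cast; linarith)) (hpos n).le)
      (g := fun n => Real.log 3 / a n + Real.log ((n:ℝ)+1) / a n)
    · intro n
      rw [← add_div]
      apply div_le_div_of_nonneg_right _ (hpos n).le
      have h2 : ((n:ℝ)+3) ≤ 3 * ((n:ℝ)+1) := by push_cast; linarith [Nat.cast_nonneg (α := ℝ) n]
      calc Real.log ((n:ℝ)+3) ≤ Real.log (3 * ((n:ℝ)+1)) :=
            Real.log_le_log (by positivity) h2
        _ = Real.log 3 + Real.log ((n:ℝ)+1) :=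
            Real.log_mul (by norm_num) (by positivity)
    · simpa using (Tendsto.div_atTop (tendsto_const_nhds (x := Real.log 3)) htop).add hlog
  have httend : Tendsto (fun n : ℕ => (p:ℝ) * (Real.log ((n:ℝ)+3) / a n) - 1/q) atTop
      (𝓝 (-(1/q))) := by
    have := (hlog3.const_mul (p:ℝ)).sub_const (1/q)
    simpa using this
  have hbot : Tendsto (fun n : ℕ => a n * ((p:ℝ) * (Real.log ((n:ℝ)+3) / a n) - 1/q)) atTop
      atBot := Tendsto.atTop_mul_neg (neg_lt_zero.2 (by positivity)) htop httend
  have hexp : Tendsto (fun n : ℕ =>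
      Real.exp (a n * ((p:ℝ) * (Real.log ((n:ℝ)+3) / a n) - 1/q))) atTop (𝓝 0) :=
    Real.tendsto_exp_atBot.comp hbot
  apply hexp.congr
  intro n
  have hne := (hpos n).ne'
  have h5 : a n * ((p:ℝ) * (Real.log ((n:ℝ)+3) / a n) - 1/q)
      = (p:ℝ) * Real.log ((n:ℝ)+3) + (-(a n)/q) := by field_simp; ring
  rw [h5, Real.exp_add]
  congr 1
  rw [← Real.log_pow]
  exact Real.exp_log (by positivity)

lemma hockey (m : ℕ) : ∀ n : ℕ, ∑ i ∈ Finset.range (n+1), Nat.choose i m = Nat.choose (n+1) (m+1) := by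
  intro n
  induction n with
  | zero => simp [Nat.choose_succ_succ]
  | succ n ih =>
      rw [Finset.sum_range_succ, ih, Nat.choose_succ_succ (n+1) m]
      simp [Nat.succ_eq_add_one, Nat.add_comm]

lemma eigen_of {a : ℕ → ℝ} (h1 : ∀ n, 1 < a n) (htop : Tendsto a atTop atTop)
    (hlog : Tendsto (fun n : ℕ => Real.log ((n : ℝ) + 1) / a n) atTop (𝓝 0))
    (m : ℕ) : IsEigen a (1/((m:ℂ)+1)) := by
  refine ⟨fun n => ((n.choose m : ℕ) : ℂ), ?_, ?_, ?_⟩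
  · intro k
    refine squeeze_zero (g := fun n : ℕ => ((n:ℝ)+3)^m * Real.exp (-(a n)/((k:ℝ)+1)))
      (fun (n : ℕ) => mul_nonneg (wt_pos a k n).le (norm_nonneg _)) ?_ ?_
    · intro n
      rw [mul_comm]
      apply mul_le_mul _ le_rfl (wt_pos a k n).le (by positivity)
      rw [Complex.norm_natCast]
      calc ((n.choose m : ℕ) : ℝ) ≤ ((n^m : ℕ) : ℝ) := by exact_mod_cast Nat.choose_le_pow n m
        _ = ((n:ℝ))^m := by push_cast; ring
        _ ≤ ((n:ℝ)+3)^m := by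
            apply pow_le_pow_left₀ (Nat.cast_nonneg n)
            linarith
    · exact tendsto_aux h1 htop hlog m _ (by positivity)
  · intro h
    have := congrFun h m
    simp [Nat.choose_self] at this
  · funext n
    simp only [cesaro, Pi.smul_apply, smul_eq_mul]
    have hsum : (∑ i ∈ Finset.range (n+1), ((i.choose m : ℕ) : ℂ))
        = ((Nat.choose (n+1) (m+1) : ℕ) : ℂ) := by
      rw [← Nat.cast_sum]
      exact congrArg Nat.cast (hockey m n)
    rw [hsum]
    have hne1 : ((n:ℂ)+1) ≠ 0 := Nat.cast_add_one_ne_zero n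
    have hne2 : ((m:ℂ)+1) ≠ 0 := Nat.cast_add_one_ne_zero m
    have key : ((n+1) * Nat.choose n m : ℕ) = (Nat.choose (n+1) (m+1)) * (m+1) := by
      simpa [Nat.succ_eq_add_one] using Nat.add_one_mul_choose_eq n m
    have keyC : ((n:ℂ)+1) * ((Nat.choose n m : ℕ) : ℂ)
        = ((Nat.choose (n+1) (m+1) : ℕ) : ℂ) * ((m:ℂ)+1) := by exact_mod_cast congrArg Nat.cast key
    rw [one_div, inv_mul_eq_div, div_eq_div_iff hne1 hne2]
    linear_combination -keyC

/-- partial-sum solution of the resolvent recursion -/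
def sig (lam : ℂ) (y : ℕ → ℂ) : ℕ → ℂ
  | 0 => 0
  | n+1 => (y n + lam * sig lam y n) / (lam - 1/((n:ℂ)+1))

def Tres (lam : ℂ) (y : ℕ → ℂ) : ℕ → ℂ := fun n => sig lam y (n+1) - sig lam y n

lemma sig_succ_mul {lam : ℂ} (hlam : ∀ m : ℕ, lam ≠ 1/((m:ℂ)+1)) (y : ℕ → ℂ) (n : ℕ) :
    (lam - 1/((n:ℂ)+1)) * sig lam y (n+1) = y n + lam * sig lam y n := by
  have hd : lam - 1/((n:ℂ)+1) ≠ 0 := sub_ne_zero.2 (hlam n)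
  rw [sig, mul_comm, div_mul_cancel₀ _ hd]

lemma sig_add (lam : ℂ) (x y : ℕ → ℂ) (n : ℕ) :
    sig lam (x + y) n = sig lam x n + sig lam y n := by
  induction n with
  | zero => simp [sig]
  | succ n ih =>
      rw [sig, sig, sig, ih, Pi.add_apply, ← add_div]
      congr 1
      ring

lemma sig_smul (lam : ℂ) (t : ℂ) (x : ℕ → ℂ) (n : ℕ) :
    sig lam (t • x) n = t * sig lam x n := by
  induction n with
  | zero => simp [sig]
  | succ n ih =>
      rw [sig, sig, ih, Pi.smul_apply, smul_eq_mul]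
      ring

lemma sig_left {lam : ℂ} (hlam : ∀ m : ℕ, lam ≠ 1/((m:ℂ)+1)) (x : ℕ → ℂ) (n : ℕ) :
    sig lam (lam • x - cesaro x) n = ∑ i ∈ Finset.range n, x i := by
  induction n with
  | zero => simp [sig]
  | succ n ih =>
      have hd : lam - 1/((n:ℂ)+1) ≠ 0 := sub_ne_zero.2 (hlam n)
      have hne : ((n:ℂ)+1) ≠ 0 := Nat.cast_add_one_ne_zero n
      rw [sig, ih, div_eq_iff hd]
      simp only [Pi.sub_apply, Pi.smul_apply, smul_eq_mul, cesaro]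
      rw [Finset.sum_range_succ]
      field_simp
      ring

lemma Tres_left {lam : ℂ} (hlam : ∀ m : ℕ, lam ≠ 1/((m:ℂ)+1)) (x : ℕ → ℂ) :
    Tres lam (lam • x - cesaro x) = x := by
  funext n
  rw [Tres, sig_left hlam, sig_left hlam, Finset.sum_range_succ, add_sub_cancel_left]

lemma Tres_sum (lam : ℂ) (x : ℕ → ℂ) (n : ℕ) :
    ∑ i ∈ Finset.range (n+1), Tres lam x i = sig lam x (n+1) := by
  have := Finset.sum_range_sub (sig lam x) (n+1)
  simpa [Tres, sig] using this

lemma Tres_right {lam : ℂ} (hlam : ∀ m : ℕ, lam ≠ 1/((m:ℂ)+1)) (x : ℕ → ℂ) :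
    lam • Tres lam x - cesaro (Tres lam x) = x := by
  funext n
  have hne : ((n:ℂ)+1) ≠ 0 := Nat.cast_add_one_ne_zero n
  have hkey := sig_succ_mul hlam x n
  have hsum := Tres_sum lam x n
  simp only [Pi.sub_apply, Pi.smul_apply, smul_eq_mul, cesaro]
  rw [hsum]
  simp only [Tres]
  field_simp at hkey ⊢
  linear_combination hkey

lemma exists_consts {lam : ℂ} (hlam : ∀ m : ℕ, lam ≠ 1/((m:ℂ)+1)) :
    ∃ D : ℝ, 0 < D ∧ ∃ c : ℕ,
      (∀ n : ℕ, 1 ≤ D * (((n:ℝ)+1) * ‖lam - 1/((n:ℂ)+1)‖)) ∧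
      (∀ n : ℕ, ‖lam‖ * ((n:ℝ)+2)^c
          ≤ ‖lam - 1/((n:ℂ)+1)‖ * ((n:ℝ)+3)^c) := by
  have habs : ∀ n : ℕ, ‖(1:ℂ)/((n:ℂ)+1)‖ = 1/((n:ℝ)+1) := by
    intro n
    have h2 : ((n:ℂ)+1) = ((n+1:ℕ):ℂ) := by push_cast; ring
    rw [norm_div, norm_one, h2, Complex.norm_natCast]
    push_cast; ring
  by_cases h0 : lam = 0
  · subst h0
    refine ⟨1, one_pos, 0, fun n => ?_, fun n => ?_⟩
    · rw [zero_sub, norm_neg, habs n]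
      have : ((n:ℝ)+1) ≠ 0 := by positivity
      field_simp
      exact le_rfl
    · simp only [norm_zero, zero_mul]
      positivity
  · have hdn : ∀ n : ℕ, lam - 1/((n:ℂ)+1) ≠ 0 := fun n => sub_ne_zero.2 (hlam n)
    have hdpos : ∀ n : ℕ, 0 < ‖lam - 1/((n:ℂ)+1)‖ :=
      fun n => norm_pos_iff.mpr (hdn n)
    -- the inverses 1/|d n| are bounded above
    have htend : Tendsto (fun n : ℕ => (‖lam - 1/((n:ℂ)+1)‖)⁻¹) atTop
        (𝓝 ((‖lam‖)⁻¹)) := by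
      have h3 : Tendsto (fun n : ℕ => (1:ℂ)/((n:ℂ)+1)) atTop (𝓝 0) := by
        rw [tendsto_zero_iff_norm_tendsto_zero]
        have : Tendsto (fun n : ℕ => 1/((n:ℝ)+1)) atTop (𝓝 0) :=
          tendsto_one_div_add_atTop_nhds_zero_nat
        apply this.congr
        intro n
        rw [← habs n]
      have h4 : Tendsto (fun n : ℕ => lam - 1/((n:ℂ)+1)) atTop (𝓝 lam) := by
        simpa using (tendsto_const_nhds (x := lam)).sub h3
      have h5 : Tendsto (fun n : ℕ => ‖lam - 1/((n:ℂ)+1)‖) atTop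
          (𝓝 (‖lam‖)) := (continuous_norm.tendsto lam).comp h4
      exact h5.inv₀ (norm_ne_zero_iff.mpr h0)
    obtain ⟨R, hR⟩ := htend.bddAbove_range
    have hRle : ∀ n : ℕ, (‖lam - 1/((n:ℂ)+1)‖)⁻¹ ≤ R := fun n => hR ⟨n, rfl⟩
    have hR0 : 0 < R := lt_of_lt_of_le (inv_pos.2 (hdpos 0)) (hRle 0)
    refine ⟨R, hR0, ⌈2*R⌉₊, fun n => ?_, fun n => ?_⟩
    · have h6 := hRle n
      have h7 := hdpos n
      rw [inv_le_iff_one_le_mul₀ h7] at h6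
      nlinarith [Nat.cast_nonneg (α := ℝ) n]
    · set d := ‖lam - 1/((n:ℂ)+1)‖ with hd
      set c : ℕ := ⌈2*R⌉₊ with hcdef
      have h7 : 0 < d := hdpos n
      have hlamle : ‖lam‖ ≤ d + 1/((n:ℝ)+1) := by
        calc ‖lam‖ = ‖(lam - 1/((n:ℂ)+1)) + 1/((n:ℂ)+1)‖ := by
              congr 1; ring
          _ ≤ d + ‖(1:ℂ)/((n:ℂ)+1)‖ := norm_add_le _ _
          _ = d + 1/((n:ℝ)+1) := by rw [habs n]
      have hdc : 2 ≤ d * c := by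
        have h8 : 2*R ≤ (c:ℝ) := Nat.le_ceil _
        have h9 : (‖lam - 1/((n:ℂ)+1)‖)⁻¹ ≤ R := hRle n
        rw [inv_le_iff_one_le_mul₀ h7] at h9
        nlinarith
      have hber : 1 + (c:ℝ)/((n:ℝ)+2) ≤ (1 + 1/((n:ℝ)+2))^c := by
        calc 1 + (c:ℝ)/((n:ℝ)+2) = 1 + (c:ℝ) * (1/((n:ℝ)+2)) := by ring
          _ ≤ (1 + 1/((n:ℝ)+2))^c := one_add_mul_le_pow (by
              have h11 : (0:ℝ) ≤ 1/((n:ℝ)+2) := by positivity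
              linarith) c
      have hmul : (1 + 1/((n:ℝ)+2))^c * ((n:ℝ)+2)^c = ((n:ℝ)+3)^c := by
        rw [← mul_pow]
        congr 1
        field_simp
        ring
      have hstep : ‖lam‖ ≤ d * (1 + (c:ℝ)/((n:ℝ)+2)) := by
        have h10 : 1/((n:ℝ)+1) ≤ d * (c:ℝ)/((n:ℝ)+2) := by
          rw [div_le_div_iff₀ (by positivity) (by positivity)]
          nlinarith [Nat.cast_nonneg (α := ℝ) n]
        calc ‖lam‖ ≤ d + 1/((n:ℝ)+1) := hlamle
          _ ≤ d + d * (c:ℝ)/((n:ℝ)+2) := by linarith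
          _ = d * (1 + (c:ℝ)/((n:ℝ)+2)) := by ring
      calc ‖lam‖ * ((n:ℝ)+2)^c ≤ (d * (1 + (c:ℝ)/((n:ℝ)+2))) * ((n:ℝ)+2)^c :=
            mul_le_mul_of_nonneg_right hstep (by positivity)
        _ ≤ (d * (1 + 1/((n:ℝ)+2))^c) * ((n:ℝ)+2)^c := by
            apply mul_le_mul_of_nonneg_right _ (by positivity)
            exact mul_le_mul_of_nonneg_left hber h7.le
        _ = d * ((n:ℝ)+3)^c := by rw [mul_assoc, hmul]

lemma sig_bound {lam : ℂ} (hlam : ∀ m : ℕ, lam ≠ 1/((m:ℂ)+1)) {D : ℝ} {c : ℕ}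
    (hD0 : 0 < D)
    (hD : ∀ n : ℕ, 1 ≤ D * (((n:ℝ)+1) * ‖lam - 1/((n:ℂ)+1)‖))
    (hc : ∀ n : ℕ, ‖lam‖ * ((n:ℝ)+2)^c
        ≤ ‖lam - 1/((n:ℂ)+1)‖ * ((n:ℝ)+3)^c)
    (y : ℕ → ℂ) : ∀ n : ℕ, ‖sig lam y n‖
      ≤ D * ((n:ℝ)+1) * ((n:ℝ)+2)^c * ∑ j ∈ Finset.range n, ‖y j‖ := by
  intro n
  induction n with
  | zero => simp [sig]
  | succ n ih =>
      have hdpos : 0 < ‖lam - 1/((n:ℂ)+1)‖ :=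
        norm_pos_iff.mpr (sub_ne_zero.2 (hlam n))
      set d := ‖lam - 1/((n:ℂ)+1)‖ with hddef
      set S := ‖sig lam y n‖ with hSdef
      set A := ‖y n‖ with hAdef
      set W := ∑ j ∈ Finset.range n, ‖y j‖ with hWdef
      have hS : 0 ≤ S := norm_nonneg _
      have hA : 0 ≤ A := norm_nonneg _
      have hW : 0 ≤ W := Finset.sum_nonneg fun j _ => norm_nonneg _
      have h1 : ‖sig lam y (n+1)‖ ≤ (A + ‖lam‖ * S) / d := by
        rw [sig, norm_div]
        apply div_le_div_of_nonneg_right _ hdpos.le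
        calc ‖y n + lam * sig lam y n‖
            ≤ A + ‖lam * sig lam y n‖ := norm_add_le _ _
          _ = A + ‖lam‖ * S := by rw [norm_mul]
      -- |lam| * S ≤ d * (D*(n+1)*(n+3)^c * W)
      have key : ‖lam‖ * S ≤ d * (D * ((n:ℝ)+1) * ((n:ℝ)+3)^c * W) := by
        have p2 : (0:ℝ) < ((n:ℝ)+2)^c := by positivity
        refine le_of_mul_le_mul_right ?_ p2
        calc ‖lam‖ * S * ((n:ℝ)+2)^c
            = (‖lam‖ * ((n:ℝ)+2)^c) * S := by ring
          _ ≤ (d * ((n:ℝ)+3)^c) * S := mul_le_mul_of_nonneg_right (hc n) hS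
          _ ≤ (d * ((n:ℝ)+3)^c) * (D * ((n:ℝ)+1) * ((n:ℝ)+2)^c * W) :=
              mul_le_mul_of_nonneg_left ih (by positivity)
          _ = (d * (D * ((n:ℝ)+1) * ((n:ℝ)+3)^c * W)) * ((n:ℝ)+2)^c := by ring
      have hAd : A ≤ d * (D * ((n:ℝ)+1) * A) := by
        have := hD n
        nlinarith
      have h2 : (A + ‖lam‖ * S) / d
          ≤ D * ((n:ℝ)+1) * A + D * ((n:ℝ)+1) * ((n:ℝ)+3)^c * W := by
        rw [div_le_iff₀ hdpos]
        nlinarith [key, hAd]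
      have h3 : D * ((n:ℝ)+1) * A + D * ((n:ℝ)+1) * ((n:ℝ)+3)^c * W
          ≤ D * (((n+1:ℕ):ℝ)+1) * (((n+1:ℕ):ℝ)+2)^c * ∑ j ∈ Finset.range (n+1), ‖y j‖ := by
        push_cast
        rw [Finset.sum_range_succ]
        have hp1 : (1:ℝ) ≤ ((n:ℝ)+3)^c := one_le_pow₀ (by linarith [Nat.cast_nonneg (α := ℝ) n] : (1:ℝ) ≤ (n:ℝ)+3)
        have e0 : D * ((n:ℝ)+1) ≤ D * ((n:ℝ)+2) * ((n:ℝ)+3)^c := by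
          nlinarith [mul_le_mul_of_nonneg_left hp1 (by positivity : (0:ℝ) ≤ D*((n:ℝ)+2))]
        have e1 : D * ((n:ℝ)+1) * A ≤ D * ((n:ℝ)+2) * ((n:ℝ)+3)^c * A :=
          mul_le_mul_of_nonneg_right e0 hA
        have e0' : D * ((n:ℝ)+1) * ((n:ℝ)+3)^c ≤ D * ((n:ℝ)+2) * ((n:ℝ)+3)^c := by
          have : D * ((n:ℝ)+1) ≤ D * ((n:ℝ)+2) := by nlinarith
          exact mul_le_mul_of_nonneg_right this (by positivity)
        have e2 : D * ((n:ℝ)+1) * ((n:ℝ)+3)^c * W ≤ D * ((n:ℝ)+2) * ((n:ℝ)+3)^c * W :=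
          mul_le_mul_of_nonneg_right e0' hW
        calc D * ((n:ℝ)+1) * A + D * ((n:ℝ)+1) * ((n:ℝ)+3)^c * W
            ≤ D * ((n:ℝ)+2) * ((n:ℝ)+3)^c * A + D * ((n:ℝ)+2) * ((n:ℝ)+3)^c * W := by linarith
          _ = D * ((n:ℝ)+1+1) * ((n:ℝ)+1+2)^c * (W + A) := by push_cast; ring_nf
        -- note (n+1)+1 = n+2 and (n+1)+2 = n+3
      exact h1.trans (h2.trans h3)

lemma Tres_est {a : ℕ → ℝ} (hmono : StrictMono a) {lam : ℂ}
    (hlam : ∀ m : ℕ, lam ≠ 1/((m:ℂ)+1)) {D : ℝ} {c : ℕ} (hD0 : 0 < D)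
    (hD : ∀ n : ℕ, 1 ≤ D * (((n:ℝ)+1) * ‖lam - 1/((n:ℂ)+1)‖))
    (hc : ∀ n : ℕ, ‖lam‖ * ((n:ℝ)+2)^c
        ≤ ‖lam - 1/((n:ℂ)+1)‖ * ((n:ℝ)+3)^c)
    {y : ℕ → ℂ} (hy : memLambda a y) (k n : ℕ) :
    wt a k n * ‖Tres lam y n‖
      ≤ (2*D*pk a (2*k+1) y) * (((n:ℝ)+3)^(c+2) * Real.exp (-(a n)/(2*((k:ℝ)+1)))) := by
  set l : ℕ := 2*k+1 with hldef
  have hl : ((l:ℕ):ℝ)+1 = 2*((k:ℝ)+1) := by rw [hldef]; push_cast; ring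
  have hpk0 : 0 ≤ pk a l y := pk_nonneg hy l
  -- each |y j| for j ≤ n
  have hyj : ∀ j, j ≤ n →
      ‖y j‖ ≤ Real.exp ((a n)/(2*((k:ℝ)+1))) * pk a l y := by
    intro j hj
    have h1 : wt a l j * ‖y j‖ ≤ pk a l y := le_pk hy l j
    have h2 : ‖y j‖
        = Real.exp ((a j)/(((l:ℕ):ℝ)+1)) * (wt a l j * ‖y j‖) := by
      rw [wt, ← mul_assoc, ← Real.exp_add]
      have h3 : (a j)/(((l:ℕ):ℝ)+1) + (-(a j)/(((l:ℕ):ℝ)+1)) = 0 := by ring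
      rw [h3, Real.exp_zero, one_mul]
    rw [h2, hl]
    apply mul_le_mul _ h1 (mul_nonneg (wt_pos a l j).le (norm_nonneg _))
      (Real.exp_pos _).le
    apply Real.exp_le_exp.2
    apply div_le_div_of_nonneg_right _ (by positivity)
    exact (hmono.monotone hj)
  have hsum : ∑ j ∈ Finset.range (n+1), ‖y j‖
      ≤ ((n:ℝ)+1) * (Real.exp ((a n)/(2*((k:ℝ)+1))) * pk a l y) := by
    calc ∑ j ∈ Finset.range (n+1), ‖y j‖
        ≤ (Finset.range (n+1)).card • (Real.exp ((a n)/(2*((k:ℝ)+1))) * pk a l y) :=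
          Finset.sum_le_card_nsmul _ _ _ (fun j hj => hyj j (Nat.lt_succ_iff.1 (Finset.mem_range.1 hj)))
      _ = ((n:ℝ)+1) * (Real.exp ((a n)/(2*((k:ℝ)+1))) * pk a l y) := by
          rw [Finset.card_range, nsmul_eq_mul]; push_cast; ring
  -- bound on |Tres|
  have hsub : ‖Tres lam y n‖
      ≤ ‖sig lam y (n+1)‖ + ‖sig lam y n‖ := by
    rw [Tres]
    simpa [sub_eq_add_neg] using norm_add_le (sig lam y (n+1)) (-(sig lam y n))
  have hSnn : (0:ℝ) ≤ ∑ j ∈ Finset.range (n+1), ‖y j‖ :=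
    Finset.sum_nonneg fun j _ => norm_nonneg _
  have hsubset : ∑ j ∈ Finset.range n, ‖y j‖
      ≤ ∑ j ∈ Finset.range (n+1), ‖y j‖ :=
    Finset.sum_le_sum_of_subset_of_nonneg (Finset.range_subset_range.2 (Nat.le_succ n))
      (fun j _ _ => norm_nonneg _)
  have hp1 : (1:ℝ) ≤ ((n:ℝ)+3)^c :=
    one_le_pow₀ (by linarith [Nat.cast_nonneg (α := ℝ) n] : (1:ℝ) ≤ (n:ℝ)+3)
  have b1 := sig_bound hlam hD0 hD hc y (n+1)
  have b2 := sig_bound hlam hD0 hD hc y n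
  have b1' : ‖sig lam y (n+1)‖
      ≤ D * ((n:ℝ)+2) * ((n:ℝ)+3)^c * ∑ j ∈ Finset.range (n+1), ‖y j‖ := by
    push_cast at b1
    calc ‖sig lam y (n+1)‖
        ≤ D * ((n:ℝ)+1+1) * ((n:ℝ)+1+2)^c * ∑ j ∈ Finset.range (n+1), ‖y j‖ := b1
      _ = D * ((n:ℝ)+2) * ((n:ℝ)+3)^c * ∑ j ∈ Finset.range (n+1), ‖y j‖ := by
          ring_nf
  have b2' : ‖sig lam y n‖
      ≤ D * ((n:ℝ)+2) * ((n:ℝ)+3)^c * ∑ j ∈ Finset.range (n+1), ‖y j‖ := by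
    calc ‖sig lam y n‖
        ≤ D * ((n:ℝ)+1) * ((n:ℝ)+2)^c * ∑ j ∈ Finset.range n, ‖y j‖ := b2
      _ ≤ D * ((n:ℝ)+2) * ((n:ℝ)+3)^c * ∑ j ∈ Finset.range (n+1), ‖y j‖ := by
          apply mul_le_mul _ hsubset (Finset.sum_nonneg fun j _ => norm_nonneg _)
            (by positivity)
          apply mul_le_mul _ (pow_le_pow_left₀ (by positivity) (by linarith) c) (by positivity)
            (by positivity)
          nlinarith
  have hT2 : ‖Tres lam y n‖
      ≤ 2 * (D * ((n:ℝ)+2) * ((n:ℝ)+3)^c) * ∑ j ∈ Finset.range (n+1), ‖y j‖ := by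
    calc ‖Tres lam y n‖
        ≤ ‖sig lam y (n+1)‖ + ‖sig lam y n‖ := hsub
      _ ≤ 2 * (D * ((n:ℝ)+2) * ((n:ℝ)+3)^c) * ∑ j ∈ Finset.range (n+1), ‖y j‖ := by
          linarith [b1', b2']
  -- combine
  have hwt : wt a k n * Real.exp ((a n)/(2*((k:ℝ)+1)))
      = Real.exp (-(a n)/(2*((k:ℝ)+1))) := by
    rw [wt, ← Real.exp_add]
    congr 1
    field_simp
    ring
  calc wt a k n * ‖Tres lam y n‖
      ≤ wt a k n * (2 * (D * ((n:ℝ)+2) * ((n:ℝ)+3)^c)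
          * (((n:ℝ)+1) * (Real.exp ((a n)/(2*((k:ℝ)+1))) * pk a l y))) := by
        apply mul_le_mul_of_nonneg_left _ (wt_pos a k n).le
        exact hT2.trans (mul_le_mul_of_nonneg_left hsum (by positivity))
    _ = (2*D*pk a l y) * (((n:ℝ)+1) * ((n:ℝ)+2) * ((n:ℝ)+3)^c)
          * (wt a k n * Real.exp ((a n)/(2*((k:ℝ)+1)))) := by ring
    _ = (2*D*pk a l y) * (((n:ℝ)+1) * ((n:ℝ)+2) * ((n:ℝ)+3)^c)
          * Real.exp (-(a n)/(2*((k:ℝ)+1))) := by rw [hwt]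
    _ ≤ (2*D*pk a l y) * ((n:ℝ)+3)^(c+2) * Real.exp (-(a n)/(2*((k:ℝ)+1))) := by
        apply mul_le_mul_of_nonneg_right _ (Real.exp_pos _).le
        apply mul_le_mul_of_nonneg_left _ (by positivity)
        rw [pow_add]
        nlinarith [hp1, Nat.cast_nonneg (α := ℝ) n, pow_nonneg
          (by positivity : (0:ℝ) ≤ (n:ℝ)+3) c]
    _ = (2*D*pk a l y) * (((n:ℝ)+3)^(c+2) * Real.exp (-(a n)/(2*((k:ℝ)+1)))) := by ring

lemma res_of {a : ℕ → ℝ} (hmono : StrictMono a) (h1 : ∀ n, 1 < a n)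
    (htop : Tendsto a atTop atTop)
    (hlog : Tendsto (fun n : ℕ => Real.log ((n : ℝ) + 1) / a n) atTop (𝓝 0))
    {lam : ℂ} (hlam : ∀ m : ℕ, lam ≠ 1/((m:ℂ)+1)) : InResolvent a lam := by
  obtain ⟨D, hD0, c, hD, hc⟩ := exists_consts hlam
  refine ⟨Tres lam, ?_, ?_, ?_, ?_, fun x _ => Tres_left hlam x, fun x _ => Tres_right hlam x⟩
  · intro y hy k
    have hq : (0:ℝ) < 2*((k:ℝ)+1) := by positivity
    have htend := tendsto_aux h1 htop hlog (c+2) _ hq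
    refine squeeze_zero (fun (n : ℕ) => mul_nonneg (wt_pos a k n).le (norm_nonneg _))
      (g := fun (n : ℕ) => (2*D*pk a (2*k+1) y) * (((n:ℝ)+3)^(c+2) * Real.exp (-(a n)/(2*((k:ℝ)+1)))))
      (fun (n : ℕ) => Tres_est hmono hlam hD0 hD hc hy k n) ?_
    simpa using htend.const_mul (2*D*pk a (2*k+1) y)
  · intro x y _ _
    funext n
    simp only [Tres, Pi.add_apply, sig_add]
    ring
  · intro t x _
    funext n
    simp only [Tres, Pi.smul_apply, smul_eq_mul, sig_smul]
    ring
  · intro k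
    have hq : (0:ℝ) < 2*((k:ℝ)+1) := by positivity
    obtain ⟨B, hB⟩ := (tendsto_aux h1 htop hlog (c+2) _ hq).bddAbove_range
    have hBle : ∀ n : ℕ, ((n:ℝ)+3)^(c+2) * Real.exp (-(a n)/(2*((k:ℝ)+1))) ≤ B :=
      fun n => hB ⟨n, rfl⟩
    have hB0 : (0:ℝ) ≤ B := le_trans (by positivity) (hBle 0)
    refine ⟨2*k+1, 2*D*B+1, by nlinarith [mul_nonneg hD0.le hB0], fun y hy => ?_⟩
    apply ciSup_le
    intro n
    have hpk0 : 0 ≤ pk a (2*k+1) y := pk_nonneg hy _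
    calc wt a k n * ‖Tres lam y n‖
        ≤ (2*D*pk a (2*k+1) y) * (((n:ℝ)+3)^(c+2) * Real.exp (-(a n)/(2*((k:ℝ)+1)))) :=
          Tres_est hmono hlam hD0 hD hc hy k n
      _ ≤ (2*D*pk a (2*k+1) y) * B := mul_le_mul_of_nonneg_left (hBle n) (by positivity)
      _ = (2*D*B) * pk a (2*k+1) y := by ring
      _ ≤ (2*D*B+1) * pk a (2*k+1) y := by nlinarith

/-- the following are equivalent: (a) `(log n)/α_n → 0` (nuclearity);
(b) `σ(C; Λ₀(α)) = σ_pt(C; Λ₀(α))`; (c) `σ(C; Λ₀(α)) = Σ = {1/m : m ≥ 1}`. -/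
theorem stmt9 (a : ℕ → ℝ) (hmono : StrictMono a) (h1 : ∀ n, 1 < a n)
    (htop : Tendsto a atTop atTop) :
    [ Tendsto (fun n : ℕ => Real.log ((n : ℝ) + 1) / a n) atTop (𝓝 0),
      {lam : ℂ | ¬ InResolvent a lam} = {lam : ℂ | IsEigen a lam},
      {lam : ℂ | ¬ InResolvent a lam} = {lam : ℂ | ∃ m : ℕ, lam = 1 / ((m : ℂ) + 1)} ].TFAE := by
  tfae_have 1 → 2 := by
    intro hlog
    ext lam
    simp only [Set.mem_setOf_eq]
    constructor
    · intro hnr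
      by_contra he
      apply hnr
      apply res_of hmono h1 htop hlog
      intro m hm
      exact he (hm ▸ eigen_of h1 htop hlog m)
    · exact eigen_not_res
  tfae_have 1 → 3 := by
    intro hlog
    ext lam
    simp only [Set.mem_setOf_eq]
    constructor
    · intro hnr
      by_contra he
      push_neg at he
      exact hnr (res_of hmono h1 htop hlog he)
    · rintro ⟨m, rfl⟩
      exact eigen_not_res (eigen_of h1 htop hlog m)
  tfae_have 2 → 1 := by
    intro h2
    apply res0_tendsto h1 htop
    by_contra hnr
    have : (0:ℂ) ∈ {lam : ℂ | ¬ InResolvent a lam} := hnr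
    rw [h2] at this
    exact not_eigen_zero a this
  tfae_have 3 → 1 := by
    intro h3
    apply res0_tendsto h1 htop
    by_contra hnr
    have : (0:ℂ) ∈ {lam : ℂ | ¬ InResolvent a lam} := hnr
    rw [h3] at this
    obtain ⟨m, hm⟩ := this
    exact one_div_ne_zero (Nat.cast_add_one_ne_zero m) hm.symm
  tfae_finish
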